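/- arXiv:2109.10440 — 5 statements merged into one kernel-verified Lean document; each statement's English description precedes it below -/
import Mathlib

section
/- Let G be an ultragraph and p an infinite path in G. Then the set H(p) = {A ∈ G⁰ : for all w ∈ A and all v ∈ p⁰, w does not connect to v} is a hereditary and saturated subset of G⁰. -/
/-- An ultragraph: a countable set of vertices, a countable set of edges, a
source map into vertices and a range map into nonempty subsets of vertices. -/
structure Ultragraph where
  V : Type
  E : Type
  countV : Countable V
  countE : Countable E
  src : E → V
  rng : E → Set V
  rng_nonempty : ∀ e, (rng e).Nonempty

namespace Ultragraph

variable (G : Ultragraph)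

/-- The generalized vertices `𝒢⁰`: the smallest collection of subsets of `G⁰`
containing the singletons and the ranges of edges, closed under relative
complements, finite unions and finite intersections. -/
inductive GV : Set G.V → Prop
  | singleton (v : G.V) : GV {v}
  | range (e : G.E) : GV (G.rng e)
  | union {A B : Set G.V} : GV A → GV B → GV (A ∪ B)
  | inter {A B : Set G.V} : GV A → GV B → GV (A ∩ B)
  | diff {A B : Set G.V} : GV A → GV B → GV (A \ B)

/-- `Conn w v` : there is a finite path (of length at least one) starting at
`w` whose range contains `v`. -/
inductive Conn : G.V → G.V → Prop
  | single (e : G.E) (v : G.V) : v ∈ G.rng e → Conn (G.src e) v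
  | cons (e : G.E) {u v : G.V} : u ∈ G.rng e → Conn u v → Conn (G.src e) v

/-- A collection `H` of generalized vertices is hereditary if it consists of
generalized vertices, is closed under ranges of edges emitted from its
singletons, finite unions, and passing to smaller generalized vertices. -/
def Hereditary (H : Set (Set G.V)) : Prop :=
  (∀ A ∈ H, G.GV A) ∧
  (∀ e : G.E, {G.src e} ∈ H → G.rng e ∈ H) ∧
  (∀ A ∈ H, ∀ B ∈ H, A ∪ B ∈ H) ∧
  (∀ A ∈ H, ∀ B : Set G.V, G.GV B → B ⊆ A → B ∈ H)

/-- A collection `H` is saturated if for every regular vertex `v`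
(`0 < |s⁻¹(v)| < ∞`), if all ranges of edges emitted by `v` lie in `H`, then
`{v} ∈ H`. -/
def Saturated (H : Set (Set G.V)) : Prop :=
  ∀ v : G.V, {e : G.E | G.src e = v}.Nonempty → {e : G.E | G.src e = v}.Finite →
    (∀ e : G.E, G.src e = v → G.rng e ∈ H) → ({v} : Set G.V) ∈ H

end Ultragraph

/-- For any infinite path `p` in an ultragraph `G` (given by a sequence of
edges `p i` with `s(p (i+1)) ∈ r(p i)`, whose vertex set `p⁰` is
`{s(p i) : i ∈ ℕ}`), the set
`H(p) = {A ∈ 𝒢⁰ : no w ∈ A connects to any vertex of p⁰}` is hereditary and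
saturated. -/
theorem stmt7 (G : Ultragraph) (p : ℕ → G.E)
    (hp : ∀ i : ℕ, G.src (p (i + 1)) ∈ G.rng (p i)) :
    G.Hereditary {A | G.GV A ∧ ∀ w ∈ A, ∀ i : ℕ, ¬ G.Conn w (G.src (p i))} ∧
    G.Saturated {A | G.GV A ∧ ∀ w ∈ A, ∀ i : ℕ, ¬ G.Conn w (G.src (p i))} := by
  constructor
  · refine ⟨fun A hA => hA.1, ?_, ?_, ?_⟩
    · intro e he
      refine ⟨Ultragraph.GV.range e, fun w hw i hc => ?_⟩
      exact he.2 (G.src e) rfl i (Ultragraph.Conn.cons e hw hc)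
    · intro A hA B hB
      refine ⟨Ultragraph.GV.union hA.1 hB.1, fun w hw i hc => ?_⟩
      rcases hw with h | h
      · exact hA.2 w h i hc
      · exact hB.2 w h i hc
    · intro A hA B hBgv hBsub
      exact ⟨hBgv, fun w hw i hc => hA.2 w (hBsub hw) i hc⟩
  · intro v _ _ hall
    refine ⟨Ultragraph.GV.singleton v, fun w hw i hc => ?_⟩
    rcases hw with rfl
    cases hc with
    | single e x hx =>
      exact (hall e rfl).2 _ hx (i + 1) (Ultragraph.Conn.single (p i) _ (hp i))
    | cons e hu hconn =>
      exact (hall e rfl).2 _ hu i hconn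
end

section
/- Let R be a Z-graded ring. If R is graded prime (i.e., for all graded ideals I, J, IJ = 0 implies I = 0 or J = 0) then R is prime. -/
open DirectSum Pointwise

section aux

variable {R : Type*} [Ring R] (𝒜 : ℤ → AddSubgroup R) [GradedRing 𝒜]

/-- Top-component of a product. -/
private lemma top_mul_aux [∀ (i : ℤ) (x : 𝒜 i), Decidable (x ≠ 0)]
    {x y : R} {m n : ℤ}
    (hx : ∀ i > m, (decompose 𝒜 x i : R) = 0)
    (hy : ∀ j > n, (decompose 𝒜 y j : R) = 0) :
    (decompose 𝒜 (x * y) (m + n) : R)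
      = (decompose 𝒜 x m : R) * (decompose 𝒜 y n : R) := by
  rw [decompose_mul, DirectSum.coe_mul_apply]
  rw [Finset.sum_eq_single (m, n)]
  · rintro ⟨i, j⟩ hb hne
    simp only [Finset.mem_filter, Finset.mem_product, DFinsupp.mem_support_iff] at hb
    obtain ⟨⟨hi, hj⟩, hij⟩ := hb
    rcases lt_or_ge m i with h | h
    · exact absurd (Subtype.ext (hx i h)) hi
    · rcases lt_or_ge n j with h' | h'
      · exact absurd (Subtype.ext (hy j h')) hj
      · exact absurd (Prod.ext (by omega) (by omega)) hne
  · intro hmn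
    have : (decompose 𝒜 x) m = 0 ∨ (decompose 𝒜 y) n = 0 := by
      by_contra hcc
      push_neg at hcc
      exact hmn (Finset.mem_filter.mpr ⟨Finset.mem_product.mpr
        ⟨DFinsupp.mem_support_iff.mpr hcc.1, DFinsupp.mem_support_iff.mpr hcc.2⟩, rfl⟩)
    rcases this with h0 | h0 <;> rw [h0] <;> simp

/-- The two-sided ideal spanned by a homogeneous element is graded. -/
private lemma span_graded_aux {c : R} {m : ℤ} (hc : c ∈ 𝒜 m) :
    ∀ x ∈ TwoSidedIdeal.span {c}, ∀ k : ℤ,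
      (decompose 𝒜 x k : R) ∈ TwoSidedIdeal.span {c} := by
  classical
  intro x hx k
  rw [TwoSidedIdeal.mem_span_iff_mem_addSubgroup_closure] at hx
  refine AddSubgroup.closure_induction ?_ ?_ ?_ ?_ hx
  · rintro z ⟨p, ⟨r, -, c', (hc' : c' ∈ ({c} : Set R)), rfl⟩, u, -, rfl⟩
    rw [Set.mem_singleton_iff] at hc'
    subst c'
    have hrw : r * c * u
        = ∑ i ∈ (decompose 𝒜 r).support, (decompose 𝒜 r i : R) * c * u := by
      simp_rw [← Finset.sum_mul]
      rw [sum_support_decompose]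
    show (decompose 𝒜 (r * c * u) k : R) ∈ TwoSidedIdeal.span {c}
    rw [hrw, decompose_sum]
    rw [DFinsupp.finset_sum_apply, AddSubmonoidClass.coe_finset_sum]
    refine sum_mem fun i _ => ?_
    have hmem : (decompose 𝒜 r i : R) * c ∈ 𝒜 (i + m) :=
      SetLike.mul_mem_graded (SetLike.coe_mem _) hc
    rw [show k = (i + m) + (k - (i + m)) by ring,
      DirectSum.coe_decompose_mul_add_of_left_mem 𝒜 hmem]
    exact TwoSidedIdeal.mul_mem_right _ _ _
      (TwoSidedIdeal.mul_mem_left _ _ _ (TwoSidedIdeal.subset_span rfl))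
  · simp only [decompose_zero, DirectSum.zero_apply, ZeroMemClass.coe_zero]
    exact zero_mem _
  · intro z w _ _ ihz ihw
    rw [decompose_add, DirectSum.add_apply, AddSubgroup.coe_add]
    exact add_mem ihz ihw
  · intro z _ ihz
    rw [decompose_neg]
    simp only [DFinsupp.neg_apply, NegMemClass.coe_neg]
    exact neg_mem ihz

end aux

/-- A two-sided ideal of a `ℤ`-graded ring is graded if it is closed under
taking homogeneous components. If a `ℤ`-graded ring is graded prime (for all
graded two-sided ideals `I, J`, `IJ = 0` implies `I = 0` or `J = 0`), then it
is prime. -/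
theorem stmt9 {R : Type*} [Ring R] (𝒜 : ℤ → AddSubgroup R) [GradedRing 𝒜]
    (h : ∀ I J : TwoSidedIdeal R,
      (∀ x ∈ I, ∀ n : ℤ, (DirectSum.decompose 𝒜 x n : R) ∈ I) →
      (∀ x ∈ J, ∀ n : ℤ, (DirectSum.decompose 𝒜 x n : R) ∈ J) →
      (∀ a ∈ I, ∀ b ∈ J, a * b = 0) → I = ⊥ ∨ J = ⊥) :
    ∀ I J : TwoSidedIdeal R, (∀ a ∈ I, ∀ b ∈ J, a * b = 0) → I = ⊥ ∨ J = ⊥ := by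
  classical
  intro I J hIJ
  by_contra hcon
  push_neg at hcon
  obtain ⟨hI, hJ⟩ := hcon
  -- extract nonzero elements
  have hexI : ∃ a ∈ I, a ≠ 0 := by
    by_contra h'
    push_neg at h'
    exact hI (SetLike.ext fun x => ⟨fun hx => h' x hx,
      fun hx => by rw [show x = 0 from hx]; exact zero_mem _⟩)
  have hexJ : ∃ b ∈ J, b ≠ 0 := by
    by_contra h'
    push_neg at h'
    exact hJ (SetLike.ext fun x => ⟨fun hx => h' x hx,
      fun hx => by rw [show x = 0 from hx]; exact zero_mem _⟩)
  obtain ⟨a, haI, ha0⟩ := hexI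
  obtain ⟨b, hbJ, hb0⟩ := hexJ
  -- top degrees
  have hsa : (decompose 𝒜 a).support.Nonempty := by
    rw [Finset.nonempty_iff_ne_empty, Ne, DFinsupp.support_eq_empty]
    intro hz
    exact ha0 (by simpa using congrArg (decompose 𝒜).symm hz)
  have hsb : (decompose 𝒜 b).support.Nonempty := by
    rw [Finset.nonempty_iff_ne_empty, Ne, DFinsupp.support_eq_empty]
    intro hz
    exact hb0 (by simpa using congrArg (decompose 𝒜).symm hz)
  set m : ℤ := (decompose 𝒜 a).support.max' hsa with hm
  set n : ℤ := (decompose 𝒜 b).support.max' hsb with hn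
  set c : R := (decompose 𝒜 a m : R) with hcdef
  set d : R := (decompose 𝒜 b n : R) with hddef
  have hc0 : c ≠ 0 := by
    have := (decompose 𝒜 a).support.max'_mem hsa
    rw [DFinsupp.mem_support_iff] at this
    simpa [hcdef, ZeroMemClass.coe_eq_zero] using this
  have hd0 : d ≠ 0 := by
    have := (decompose 𝒜 b).support.max'_mem hsb
    rw [DFinsupp.mem_support_iff] at this
    simpa [hddef, ZeroMemClass.coe_eq_zero] using this
  have hma : ∀ i > m, (decompose 𝒜 a i : R) = 0 := by
    intro i hi
    have : i ∉ (decompose 𝒜 a).support := fun hmem =>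
      absurd ((decompose 𝒜 a).support.le_max' i hmem) (not_le.mpr hi)
    rw [DFinsupp.notMem_support_iff] at this
    rw [this, ZeroMemClass.coe_zero]
  have hnb : ∀ j > n, (decompose 𝒜 b j : R) = 0 := by
    intro j hj
    have : j ∉ (decompose 𝒜 b).support := fun hmem =>
      absurd ((decompose 𝒜 b).support.le_max' j hmem) (not_le.mpr hj)
    rw [DFinsupp.notMem_support_iff] at this
    rw [this, ZeroMemClass.coe_zero]
  -- key: c * r * d = 0 for all r
  have key : ∀ r : R, c * r * d = 0 := by
    have keyhom : ∀ (k : ℤ) (r : R), r ∈ 𝒜 k → c * r * d = 0 := by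
      intro k r hr
      have h1 : ∀ i > m + k, (decompose 𝒜 (a * r) i : R) = 0 := by
        intro i hi
        rw [show i = (i - k) + k by ring,
          DirectSum.coe_decompose_mul_add_of_right_mem 𝒜 hr, hma (i - k) (by omega), zero_mul]
      have h2 : (decompose 𝒜 (a * r) (m + k) : R) = c * r :=
        DirectSum.coe_decompose_mul_add_of_right_mem 𝒜 hr
      have h3 : (a * r) * b = 0 := hIJ _ (I.mul_mem_right _ _ haI) _ hbJ
      have h4 := top_mul_aux 𝒜 h1 hnb
      rw [h2, h3] at h4
      simpa using h4.symm
    intro r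
    have hrw : c * r * d
        = ∑ k ∈ (decompose 𝒜 r).support, c * (decompose 𝒜 r k : R) * d := by
      simp_rw [← Finset.sum_mul, ← Finset.mul_sum]
      rw [sum_support_decompose]
    rw [hrw]
    refine Finset.sum_eq_zero fun k _ => keyhom k _ (SetLike.coe_mem _)
  -- the graded ideals spanned by c and d
  have hcm : c ∈ 𝒜 m := SetLike.coe_mem _
  have hdn : d ∈ 𝒜 n := SetLike.coe_mem _
  have hprod : ∀ x ∈ TwoSidedIdeal.span {c}, ∀ y ∈ TwoSidedIdeal.span {d}, x * y = 0 := by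
    intro x hx y hy
    rw [TwoSidedIdeal.mem_span_iff_mem_addSubgroup_closure] at hx hy
    refine AddSubgroup.closure_induction ?_ ?_ ?_ ?_ hx
    · rintro z ⟨p, ⟨r, -, c', (hc' : c' ∈ ({c} : Set R)), rfl⟩, u, -, rfl⟩
      rw [Set.mem_singleton_iff] at hc'
      subst c'
      refine AddSubgroup.closure_induction ?_ ?_ ?_ ?_ hy
      · rintro w ⟨q, ⟨s, -, d', (hd' : d' ∈ ({d} : Set R)), rfl⟩, v, -, rfl⟩
        rw [Set.mem_singleton_iff] at hd'
        subst d'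
        have h5 : r * c * u * (s * d * v) = r * (c * (u * s) * d) * v := by
          noncomm_ring
        rw [h5, key (u * s), mul_zero, zero_mul]
      · rw [mul_zero]
      · intro w₁ w₂ _ _ ih₁ ih₂
        rw [mul_add, ih₁, ih₂, add_zero]
      · intro w _ ih
        rw [mul_neg, ih, neg_zero]
    · rw [zero_mul]
    · intro z₁ z₂ _ _ ih₁ ih₂
      rw [add_mul, ih₁, ih₂, add_zero]
    · intro z _ ih
      rw [neg_mul, ih, neg_zero]
  rcases h (TwoSidedIdeal.span {c}) (TwoSidedIdeal.span {d})
      (span_graded_aux 𝒜 hcm) (span_graded_aux 𝒜 hdn) hprod with h0 | h0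
  · have hmem : c ∈ TwoSidedIdeal.span {c} := TwoSidedIdeal.subset_span rfl
    rw [h0] at hmem
    exact hc0 hmem
  · have hmem : d ∈ TwoSidedIdeal.span {d} := TwoSidedIdeal.subset_span rfl
    rw [h0] at hmem
    exact hd0 hmem
end

section
/- Let R be a Z-graded ring. If every nonzero graded ideal I of R satisfies I² ≠ 0, then R is semiprime. -/
/-!
If `I² = 0` and `0 ≠ a ∈ I`, then `a x a = 0` for every `x`. Let `c` be the top-degree component
of `a`, of degree `d`. For `x` homogeneous of degree `k`, the component of `a x a` in degree
`d + k + d` is `c x c`, so `c x c = 0` for every `x`. Hence the two-sided ideal generated by `c`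
squares to zero; it is graded because `c` is homogeneous, and nonzero because `c ≠ 0`.
-/

open DirectSum

section TopComponent

variable {ι R σ : Type*} [AddCommMonoid ι] [LinearOrder ι] [DecidableEq ι] [Semiring R]
  [SetLike σ R] [AddSubmonoidClass σ R] (𝒜 : ι → σ) [GradedRing 𝒜]

theorem DirectSum.exists_top_decompose_ne_zero {a : R} (ha : a ≠ 0) :
    ∃ d, decompose 𝒜 a d ≠ 0 ∧ ∀ i, d < i → decompose 𝒜 a i = 0 := by
  classical
  have hS : (decompose 𝒜 a).support.Nonempty := by
    rw [Finset.nonempty_iff_ne_empty, Ne, DFinsupp.support_eq_empty]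
    exact fun h => ha (by simpa using congrArg (decompose 𝒜).symm h)
  refine ⟨_, DFinsupp.mem_support_iff.1 (Finset.max'_mem _ hS), fun i hi => ?_⟩
  by_contra h
  exact hi.not_ge (Finset.le_max' _ i (DFinsupp.mem_support_iff.2 h))

theorem DirectSum.decompose_eq_zero_of_mem_of_lt {x : R} {k i : ι} (hx : x ∈ 𝒜 k) (hi : k < i) :
    decompose 𝒜 x i = 0 :=
  Subtype.ext (decompose_of_mem_ne 𝒜 hx hi.ne)

variable [IsOrderedCancelAddMonoid ι] {𝒜} {a b : R} {d e : ι}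

theorem DirectSum.decompose_mul_eq_zero_of_lt (ha : ∀ i, d < i → decompose 𝒜 a i = 0)
    (hb : ∀ j, e < j → decompose 𝒜 b j = 0) {n : ι} (hn : d + e < n) :
    decompose 𝒜 (a * b) n = 0 := by
  classical
  refine Subtype.ext ?_
  rw [decompose_mul, coe_mul_apply, ZeroMemClass.coe_zero]
  refine Finset.sum_eq_zero fun ij hij => ?_
  simp only [Finset.mem_filter, Finset.mem_product, DFinsupp.mem_support_iff] at hij
  obtain ⟨⟨hi, hj⟩, rfl⟩ := hij
  exact absurd (add_le_add (not_lt.1 (mt (ha _) hi)) (not_lt.1 (mt (hb _) hj))) hn.not_ge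

theorem DirectSum.coe_decompose_mul_add_of_top (ha : ∀ i, d < i → decompose 𝒜 a i = 0)
    (hb : ∀ j, e < j → decompose 𝒜 b j = 0) :
    (decompose 𝒜 (a * b) (d + e) : R) = decompose 𝒜 a d * decompose 𝒜 b e := by
  classical
  rw [decompose_mul, coe_mul_apply, Finset.sum_eq_single (d, e)]
  · rintro ⟨i, j⟩ hij hne
    simp only [Finset.mem_filter, Finset.mem_product, DFinsupp.mem_support_iff] at hij
    obtain ⟨⟨hi, hj⟩, hsum⟩ := hij
    exact absurd ((add_eq_add_iff_eq_and_eq (not_lt.1 (mt (ha _) hi))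
      (not_lt.1 (mt (hb _) hj))).1 hsum) (by simpa using hne)
  · intro hde
    simp only [Finset.mem_filter, Finset.mem_product, DFinsupp.mem_support_iff, and_true,
      not_and_or, not_not] at hde
    rcases hde with h | h <;> simp [h]

theorem DirectSum.top_mul_mul_top_eq_zero (ha : ∀ i, d < i → decompose 𝒜 a i = 0)
    (h : ∀ x, a * x * a = 0) (x : R) :
    (decompose 𝒜 a d : R) * x * decompose 𝒜 a d = 0 := by
  induction x using DirectSum.Decomposition.inductionOn 𝒜 with
  | zero => simp
  | @homogeneous k x =>
    have hx : ∀ j, k < j → decompose 𝒜 (x : R) j = 0 :=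
      fun j => decompose_eq_zero_of_mem_of_lt 𝒜 x.2
    have hax : ∀ n, d + k < n → decompose 𝒜 (a * x) n = 0 :=
      fun n => decompose_mul_eq_zero_of_lt ha hx
    calc (decompose 𝒜 a d : R) * x * decompose 𝒜 a d
        = (decompose 𝒜 (a * x) (d + k) : R) * decompose 𝒜 a d := by
          rw [coe_decompose_mul_add_of_top ha hx, decompose_of_mem_same 𝒜 x.2]
      _ = decompose 𝒜 (a * x * a) (d + k + d) := (coe_decompose_mul_add_of_top hax ha).symm
      _ = 0 := by simp [h]
  | add x y hx hy => rw [mul_add, add_mul, hx, hy, add_zero]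

end TopComponent

namespace TwoSidedIdeal

variable {R : Type*} [Ring R]

theorem isHomogeneous_span_singleton {ι σ : Type*} [AddMonoid ι] [DecidableEq ι]
    [SetLike σ R] [AddSubgroupClass σ R] (𝒜 : ι → σ) [GradedRing 𝒜] {c : R} {d : ι}
    (hc : c ∈ 𝒜 d) : SetLike.IsHomogeneous 𝒜 (span {c}) := by
  classical
  intro n x hx
  induction hx using span_induction generalizing n with
  | mem x hx =>
    rw [Set.mem_singleton_iff.1 hx]
    obtain rfl | hne := eq_or_ne d n
    · rw [decompose_of_mem_same 𝒜 hc]; exact subset_span rfl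
    · rw [decompose_of_mem_ne 𝒜 hc hne]; exact zero_mem _
  | zero => rw [decompose_zero, DirectSum.zero_apply, ZeroMemClass.coe_zero]; exact zero_mem _
  | add x y _ _ hx hy =>
    rw [decompose_add, DirectSum.add_apply, AddMemClass.coe_add]; exact add_mem _ (hx n) (hy n)
  | neg x _ hx =>
    rw [decompose_neg, DFinsupp.neg_apply, NegMemClass.coe_neg]; exact neg_mem _ (hx n)
  | left_absorb a x _ hx =>
    rw [decompose_mul, coe_mul_apply]
    exact sum_mem fun ij _ => mul_mem_left _ _ _ (hx ij.2)
  | right_absorb b x _ hx =>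
    rw [decompose_mul, coe_mul_apply]
    exact sum_mem fun ij _ => mul_mem_right _ _ _ (hx ij.1)

theorem mul_mul_eq_zero_of_mem_span_singleton {c : R} (hc : ∀ x, c * x * c = 0) {v : R}
    (hv : v ∈ span {c}) (y : R) : c * y * v = 0 := by
  induction hv using span_induction generalizing y with
  | mem x hx => rw [Set.mem_singleton_iff.1 hx, hc]
  | zero => rw [mul_zero]
  | add x z _ _ hx hz => rw [mul_add, hx, hz, add_zero]
  | neg x _ hx => rw [mul_neg, hx, neg_zero]
  | left_absorb a x _ hx => rw [← mul_assoc, mul_assoc c, hx]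
  | right_absorb b x _ hx => rw [← mul_assoc, hx, zero_mul]

theorem mul_eq_zero_of_mem_span_singleton {c : R} (hc : ∀ x, c * x * c = 0) {u v : R}
    (hu : u ∈ span {c}) (hv : v ∈ span {c}) : u * v = 0 := by
  induction hu using span_induction generalizing v with
  | mem x hx =>
    simpa [Set.mem_singleton_iff.1 hx] using mul_mul_eq_zero_of_mem_span_singleton hc hv 1
  | zero => rw [zero_mul]
  | add x z _ _ hx hz => rw [add_mul, hx hv, hz hv, add_zero]
  | neg x _ hx => rw [neg_mul, hx hv, neg_zero]
  | left_absorb a x _ hx => rw [mul_assoc, hx hv, mul_zero]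
  | right_absorb b x _ hx => rw [mul_assoc, hx (mul_mem_left _ _ _ hv)]

end TwoSidedIdeal

/-- If every nonzero graded two-sided ideal `I` of a `ℤ`-graded ring satisfies
`I² ≠ 0`, then the ring is semiprime (`I² = 0` implies `I = 0` for all
two-sided ideals `I`). -/
theorem stmt10 {R : Type*} [Ring R] (𝒜 : ℤ → AddSubgroup R) [GradedRing 𝒜]
    (h : ∀ I : TwoSidedIdeal R,
      (∀ x ∈ I, ∀ n : ℤ, (DirectSum.decompose 𝒜 x n : R) ∈ I) →
      I ≠ ⊥ → ¬ (∀ a ∈ I, ∀ b ∈ I, a * b = 0)) :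
    ∀ I : TwoSidedIdeal R, (∀ a ∈ I, ∀ b ∈ I, a * b = 0) → I = ⊥ := by
  intro I hI
  by_contra hne
  obtain ⟨a, haI, ha⟩ : ∃ a ∈ I, a ≠ 0 := by
    by_contra! hzero
    exact hne (eq_bot_iff.2 fun x hx => (TwoSidedIdeal.mem_bot R).2 (hzero x hx))
  obtain ⟨d, hd, htop⟩ := exists_top_decompose_ne_zero 𝒜 ha
  set c : R := (decompose 𝒜 a d : R)
  have hc : ∀ x, c * x * c = 0 := top_mul_mul_top_eq_zero htop fun x => by
    rw [mul_assoc]; exact hI a haI _ (I.mul_mem_left x a haI)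
  refine h (TwoSidedIdeal.span {c})
    (fun x hx n => TwoSidedIdeal.isHomogeneous_span_singleton 𝒜 (decompose 𝒜 a d).2 n hx)
    (fun hbot => hd ?_) fun u hu v hv => TwoSidedIdeal.mul_eq_zero_of_mem_span_singleton hc hu hv
  have hcJ : c ∈ TwoSidedIdeal.span {c} := TwoSidedIdeal.subset_span rfl
  rwa [hbot, TwoSidedIdeal.mem_bot, ZeroMemClass.coe_eq_zero] at hcJ
end

section
/- Let p be an infinite path in an ultragraph G that is tail-equivalent to c^∞ for some closed path c. Then the isotropy group of the Deaconu–Renault groupoid Γ(T, σ) at the corresponding unit ξ^p is isomorphic to the integers Z; if p is not tail-equivalent to any c^∞, the isotropy group at ξ^p is trivial. -/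
/-- The isotropy group of the Deaconu–Renault groupoid of `σ : X → X` at a
point `x`, viewed as a subset of `ℤ`:
`{m - n : σⁿ(x) = σᵐ(x)}`. -/
def drIsotropy {X : Type*} (σ : X → X) (x : X) : Set ℤ :=
  {k | ∃ m n : ℕ, k = (m : ℤ) - n ∧ σ^[n] x = σ^[m] x}

lemma drIter_add_eq {X : Type*} (σ : X → X) (x : X) {m n m' n' : ℕ}
    (h : σ^[n] x = σ^[m] x) (h' : σ^[n'] x = σ^[m'] x) :
    σ^[n + n'] x = σ^[m + m'] x := by
  rw [Function.iterate_add_apply, h', ← Function.iterate_add_apply,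
      Nat.add_comm n m', Function.iterate_add_apply, h,
      ← Function.iterate_add_apply, Nat.add_comm m' m]

/-- The isotropy as an additive subgroup of `ℤ`. -/
def drIsotropySubgroup {X : Type*} (σ : X → X) (x : X) : AddSubgroup ℤ where
  carrier := drIsotropy σ x
  zero_mem' := ⟨0, 0, by simp, rfl⟩
  add_mem' := by
    rintro a b ⟨m, n, rfl, h⟩ ⟨m', n', rfl, h'⟩
    exact ⟨m + m', n + n', by push_cast; ring, drIter_add_eq σ x h h'⟩
  neg_mem' := by
    rintro a ⟨m, n, rfl, h⟩
    exact ⟨n, m, by ring, h.symm⟩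

/-- In a Deaconu–Renault groupoid, the isotropy group at `x` is trivial unless
`x` is eventually periodic (i.e. `σⁿ(x) = σᵐ(x)` for some `m ≠ n`), in which
case it is infinite cyclic: it equals `dℤ` for some `d ≠ 0`, hence is
isomorphic to `ℤ`. -/
theorem stmt14 {X : Type*} (σ : X → X) (x : X) :
    (¬ (∃ m n : ℕ, m ≠ n ∧ σ^[n] x = σ^[m] x) → drIsotropy σ x = {0}) ∧
    ((∃ m n : ℕ, m ≠ n ∧ σ^[n] x = σ^[m] x) →
      ∃ d : ℤ, d ≠ 0 ∧ drIsotropy σ x = Set.range fun j : ℤ => j * d) := by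
  constructor
  · intro h
    ext k
    simp only [drIsotropy, Set.mem_setOf_eq, Set.mem_singleton_iff]
    constructor
    · rintro ⟨m, n, rfl, hmn⟩
      have : m = n := by
        by_contra hne
        exact h ⟨m, n, hne, hmn⟩
      omega
    · rintro rfl
      exact ⟨0, 0, by simp, rfl⟩
  · rintro ⟨m, n, hne, heq⟩
    obtain ⟨d, hd⟩ := Int.subgroup_cyclic (drIsotropySubgroup σ x)
    have hcar : drIsotropy σ x = Set.range fun j : ℤ => j * d := by
      ext k
      have : k ∈ drIsotropy σ x ↔ k ∈ AddSubgroup.closure ({d} : Set ℤ) := by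
        constructor
        · intro hk
          rw [← hd]; exact hk
        · intro hk
          have : k ∈ drIsotropySubgroup σ x := by rw [hd]; exact hk
          exact this
      rw [this, AddSubgroup.mem_closure_singleton]
      constructor
      · rintro ⟨j, rfl⟩; exact ⟨j, (zsmul_eq_mul d j).symm ▸ rfl⟩
      · rintro ⟨j, rfl⟩; exact ⟨j, (zsmul_eq_mul d j)⟩
    refine ⟨d, ?_, hcar⟩
    intro hd0
    have hk : ((m : ℤ) - n) ∈ drIsotropy σ x := ⟨m, n, rfl, heq⟩
    rw [hcar] at hk
    obtain ⟨j, hj⟩ := hk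
    simp only [hd0, mul_zero] at hj
    omega
end

section
/- Let K be a field, let R be a K-algebra containing elements p, t, t* with t*t = p, tp = pt = t, pt* = t*p = t*, p² = p, and p ≠ 0, tt* = p, and such that the subalgebra generated by p, t, t* sits in degrees matching a Z-grading with deg t = 1, deg t* = −1, deg p = 0 and the degree-n component of pRp is spanned by tⁿ (for n ≥ 0) and (t*)^{−n} (for n < 0). Then pRp is isomorphic as a K-algebra to the Laurent polynomial ring K[x, x⁻¹], via p ↦ 1, t ↦ x, t* ↦ x⁻¹. -/
/-!
Applying the spanning hypothesis in degree `0` to `p` itself shows that `p` is a scalar, hence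
`p = 1`, so `t` is a unit with inverse `t*` and the corner `pRp` is all of `R`. Evaluation of Laurent
polynomials at this unit is then an algebra map `K[x,x⁻¹] → R`: it is injective because the
nonzero powers `tⁿ` lie in distinct graded pieces and are therefore linearly independent, and
surjective because each graded piece is spanned by the corresponding power of `t`.
-/

open LaurentPolynomial

theorem IsIdempotentElem.eq_one_of_eq_smul_one {K R : Type*} [Field K] [Ring R] [Algebra K R]
    {p : R} (hp : IsIdempotentElem p) (hp0 : p ≠ 0) {c : K} (hc : p = c • 1) : p = 1 := by
  have : Nontrivial R := nontrivial_of_ne p 0 hp0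
  rw [← Algebra.algebraMap_eq_smul_one] at hc
  subst hc
  have hc : IsIdempotentElem c := (algebraMap K R).injective (by simpa using hp.eq)
  rcases IsIdempotentElem.iff_eq_zero_or_one.mp hc with rfl | rfl
  · exact absurd (map_zero _) hp0
  · exact map_one _

theorem Units.val_zpow_eq_ite {M : Type*} [Monoid M] (u : Mˣ) (n : ℤ) :
    ((u ^ n : Mˣ) : M) = if 0 ≤ n then (u : M) ^ n.toNat else ((u⁻¹ : Mˣ) : M) ^ (-n).toNat := by
  obtain ⟨k, rfl | rfl⟩ := Int.eq_nat_or_neg n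
  · simp
  · rcases k with _ | k
    · simp
    · rw [if_neg (by omega), neg_neg, Int.toNat_natCast, zpow_neg, zpow_natCast, ← inv_pow,
        Units.val_pow_eq_pow_val]

theorem Units.val_zpow_mem_graded {ι R σ : Type*} [AddGroup ι] [Monoid R] [SetLike σ R]
    {𝒜 : ι → σ} [SetLike.GradedMonoid 𝒜] (u : Rˣ) {i : ι} (hu : (u : R) ∈ 𝒜 i)
    (hu' : ((u⁻¹ : Rˣ) : R) ∈ 𝒜 (-i)) (n : ℤ) : ((u ^ n : Rˣ) : R) ∈ 𝒜 (n • i) := by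
  obtain ⟨k, rfl | rfl⟩ := Int.eq_nat_or_neg n
  · simpa using SetLike.pow_mem_graded k hu
  · simpa [zpow_neg, ← inv_pow] using SetLike.pow_mem_graded k hu'

namespace LaurentPolynomial

variable {K R : Type*} [Field K] [Ring R] [Algebra K R]

noncomputable def evalUnit (u : Rˣ) : K[T;T⁻¹] →ₐ[K] R :=
  AddMonoidAlgebra.lift K R ℤ ((Units.coeHom R).comp (zpowersHom Rˣ u))

@[simp]
theorem evalUnit_single (u : Rˣ) (n : ℤ) (c : K) :
    evalUnit u (.single n c) = c • ((u ^ n : Rˣ) : R) :=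
  AddMonoidAlgebra.lift_single _ n c

@[simp]
theorem evalUnit_T (u : Rˣ) (n : ℤ) : evalUnit (K := K) u (T n) = ((u ^ n : Rˣ) : R) := by
  rw [T, evalUnit_single, one_smul]

theorem evalUnit_apply (u : Rˣ) (f : K[T;T⁻¹]) :
    evalUnit u f = Finsupp.linearCombination K (fun n : ℤ => ((u ^ n : Rˣ) : R)) f.coeff := by
  rw [evalUnit, AddMonoidAlgebra.lift_apply, Finsupp.linearCombination_apply]
  rfl

variable (𝒜 : ℤ → Submodule K R) [DirectSum.Decomposition 𝒜]

theorem evalUnit_injective [Nontrivial R] (u : Rˣ) (hu : ∀ n, ((u ^ n : Rˣ) : R) ∈ 𝒜 n) :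
    Function.Injective (evalUnit (K := K) u) := by
  have hind : LinearIndependent K (fun n : ℤ => ((u ^ n : Rˣ) : R)) :=
    iSupIndep.linearIndependent 𝒜
      (DirectSum.Decomposition.isInternal 𝒜).submodule_iSupIndep hu fun n => (u ^ n).ne_zero
  intro f g hfg
  rw [evalUnit_apply, evalUnit_apply] at hfg
  exact AddMonoidAlgebra.coeff_injective (hind hfg)

theorem evalUnit_surjective (u : Rˣ) (hspan : ∀ n, 𝒜 n ≤ K ∙ ((u ^ n : Rˣ) : R)) :
    Function.Surjective (evalUnit (K := K) u) := by
  refine (LinearMap.range_eq_top (f := (evalUnit u).toLinearMap)).mp (top_le_iff.mp ?_)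
  rw [← (DirectSum.Decomposition.isInternal 𝒜).submodule_iSup_eq_top]
  exact iSup_le fun n =>
    (hspan n).trans ((Submodule.span_singleton_le_iff_mem _ _).mpr ⟨T n, evalUnit_T u n⟩)

end LaurentPolynomial

theorem stmt16_general {K : Type*} [Field K] {R : Type*} [Ring R] [Algebra K R]
    (𝒜 : ℤ → Submodule K R) [GradedAlgebra 𝒜]
    (p t ts : R)
    (hp0 : p ∈ 𝒜 0) (ht1 : t ∈ 𝒜 1) (hts1 : ts ∈ 𝒜 (-1))
    (hidem : p * p = p) (hpne : p ≠ 0)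
    (htst : ts * t = p) (htts : t * ts = p)
    (hspan : ∀ (n : ℤ) (x : R), x ∈ 𝒜 n → p * x * p = x →
      ∃ c : K, x = c • (if 0 ≤ n then t ^ n.toNat else ts ^ (-n).toNat)) :
    ∃ φ : LaurentPolynomial K →ₗ[K] R,
      (∀ a b : LaurentPolynomial K, φ (a * b) = φ a * φ b) ∧
      Function.Injective φ ∧
      Set.range φ = {x : R | p * x * p = x} ∧
      φ 1 = p ∧ φ (LaurentPolynomial.T 1) = t ∧ φ (LaurentPolynomial.T (-1)) = ts := by
  have hp1 : p = 1 := by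
    obtain ⟨c, hc⟩ := hspan 0 p hp0 (by rw [hidem, hidem])
    exact IsIdempotentElem.eq_one_of_eq_smul_one hidem hpne (by simpa using hc)
  subst hp1
  have : Nontrivial R := nontrivial_of_ne 1 0 hpne
  let u : Rˣ := ⟨t, ts, htts, htst⟩
  have hmem (n : ℤ) : ((u ^ n : Rˣ) : R) ∈ 𝒜 n := by
    simpa using u.val_zpow_mem_graded (𝒜 := 𝒜) ht1 hts1 n
  have hle (n : ℤ) : 𝒜 n ≤ K ∙ ((u ^ n : Rˣ) : R) := fun x hx => by
    obtain ⟨c, hc⟩ := hspan n x hx (by simp)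
    exact Submodule.mem_span_singleton.mpr ⟨c, by rw [hc, u.val_zpow_eq_ite]; rfl⟩
  refine ⟨(evalUnit u).toLinearMap, (evalUnit u).map_mul, evalUnit_injective 𝒜 u hmem,
    ?_, (evalUnit u).map_one, ?_, ?_⟩
  · simpa using (evalUnit_surjective 𝒜 u hle).range_eq
  · simp [u]
  · simp [u]

/-- Let `R` be a `ℤ`-graded `K`-algebra containing elements `p, t, ts` (with
`ts` playing the role of `t*`) of degrees `0, 1, -1` respectively, satisfying
`t* t = t t* = p`, `tp = pt = t`, `p t* = t* p = t*`, `p² = p ≠ 0`, and such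
that the degree-`n` component of the corner `pRp` is spanned by `tⁿ` (for
`n ≥ 0`) and `(t*)^{-n}` (for `n < 0`). Then `pRp` is isomorphic as a
`K`-algebra to the Laurent polynomial ring `K[x,x⁻¹]`, via an isomorphism
matching `1 ↔ p`, `x ↔ t`, `x⁻¹ ↔ t*`. -/
theorem stmt16 {K : Type*} [Field K] {R : Type*} [Ring R] [Algebra K R]
    (𝒜 : ℤ → Submodule K R) [GradedAlgebra 𝒜]
    (p t ts : R)
    (hp0 : p ∈ 𝒜 0) (ht1 : t ∈ 𝒜 1) (hts1 : ts ∈ 𝒜 (-1))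
    (hidem : p * p = p) (hpne : p ≠ 0)
    (htst : ts * t = p) (htts : t * ts = p)
    (htp : t * p = t) (hpt : p * t = t)
    (hpts : p * ts = ts) (htsp : ts * p = ts)
    (hspan : ∀ (n : ℤ) (x : R), x ∈ 𝒜 n → p * x * p = x →
      ∃ c : K, x = c • (if 0 ≤ n then t ^ n.toNat else ts ^ (-n).toNat)) :
    ∃ φ : LaurentPolynomial K →ₗ[K] R,
      (∀ a b : LaurentPolynomial K, φ (a * b) = φ a * φ b) ∧
      Function.Injective φ ∧
      Set.range φ = {x : R | p * x * p = x} ∧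
      φ 1 = p ∧ φ (LaurentPolynomial.T 1) = t ∧ φ (LaurentPolynomial.T (-1)) = ts :=
  stmt16_general 𝒜 p t ts hp0 ht1 hts1 hidem hpne htst htts hspan
end
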